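/- Let μ ∈ {0,1} and let φ ∈ H¹(ℝ²) satisfy E_μ(φ) ≥ 0 and φ ∈ 𝒦⁻_μ, i.e. φ ≠ 0, S_μ(φ) < S_μ(Q_μ) and I_μ(φ) < 0. Then I_μ(φ) ≤ 2(S_μ(φ) − S_μ(Q_μ)). -/

import Mathlib

open MeasureTheory Real Filter
open scoped Topology ENNReal

noncomputable section

abbrev E2 : Type := EuclideanSpace ℝ (Fin 2)

/-- Squared `L²` norm. -/
def l2Sq (u : E2 → ℂ) : ℝ := ∫ x : E2, ‖u x‖ ^ 2

/-- Squared `L²` norm of the gradient. -/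
def gradSq (u : E2 → ℂ) : ℝ := ∫ x : E2, ‖fderiv ℝ u x‖ ^ 2

/-- Membership in `H¹(ℝ²)`. -/
def MemH1 (u : E2 → ℂ) : Prop :=
  MemLp u 2 volume ∧ Differentiable ℝ u ∧ MemLp (fun x => fderiv ℝ u x) 2 volume

/-- Integrability of all exponentials `e^{a|u|²} - 1`. -/
def ExpIntegrable (u : E2 → ℂ) : Prop :=
  ∀ a : ℝ, 0 < a → Integrable (fun x : E2 => Real.exp (a * ‖u x‖ ^ 2) - 1)

/-- The nonlinearity `f_μ`. -/
def fmu (μ : ℝ) (z : ℂ) : ℂ :=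
  ((Real.exp (4 * π * ‖z‖ ^ 2) - 1 - 4 * π * μ * ‖z‖ ^ 2 : ℝ) : ℂ) * z

/-- The potential `F_μ`. -/
def Fmu (μ : ℝ) (z : ℂ) : ℝ :=
  (Real.exp (4 * π * ‖z‖ ^ 2) - 1 - 4 * π * ‖z‖ ^ 2 - 8 * π ^ 2 * μ * ‖z‖ ^ 4) / (8 * π)

/-- `Re (z̄ f_μ(z))`. -/
def nlDensity (μ : ℝ) (z : ℂ) : ℝ :=
  (Real.exp (4 * π * ‖z‖ ^ 2) - 1 - 4 * π * μ * ‖z‖ ^ 2) * ‖z‖ ^ 2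

/-- Energy. -/
def Emu (μ : ℝ) (u : E2 → ℂ) : ℝ := gradSq u / 2 - ∫ x : E2, Fmu μ (u x)

/-- Action. -/
def Smu (μ : ℝ) (u : E2 → ℂ) : ℝ := Emu μ u + l2Sq u / 2

/-- The functional `P_μ`. -/
def Pmu (μ : ℝ) (u : E2 → ℂ) : ℝ := l2Sq u / 2 - ∫ x : E2, Fmu μ (u x)

/-- The virial functional `I_μ`. -/
def Imu (μ : ℝ) (u : E2 → ℂ) : ℝ :=
  gradSq u - ∫ x : E2, (nlDensity μ (u x) - 2 * Fmu μ (u x))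

/-- Laplacian on `ℝ²` (sum of second directional derivatives). -/
def lap (v : E2 → ℂ) (x : E2) : ℂ :=
  ∑ i : Fin 2, fderiv ℝ (fun y => fderiv ℝ v y (EuclideanSpace.single i 1)) x
      (EuclideanSpace.single i 1)

/-- `φ` is a (pointwise) solution to the elliptic equation `-Δφ + φ = f_μ(φ)`. -/
def IsEllipticSolution (μ : ℝ) (φ : E2 → ℂ) : Prop :=
  ∀ x, -lap φ x + φ x = fmu μ (φ x)

/-- Ground state for `-ΔQ + Q = f_μ(Q)`. -/
structure IsGroundState (μ : ℝ) (Q : E2 → ℂ) : Prop where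
  mem : MemH1 Q
  expint : ExpIntegrable Q
  nonzero : ¬ Q =ᵐ[volume] (0 : E2 → ℂ)
  radial : ∀ x y : E2, ‖x‖ = ‖y‖ → Q x = Q y
  solves : IsEllipticSolution μ Q
  minimal : ∀ φ : E2 → ℂ, MemH1 φ → ExpIntegrable φ → ¬ φ =ᵐ[volume] (0 : E2 → ℂ) →
    IsEllipticSolution μ φ → Smu μ Q ≤ Smu μ φ
  grad_pos : 0 < gradSq Q
  grad_lt_one : gradSq Q < 1

/-!
In dimension two the dilation `φ_r(x) = φ(r x)` leaves `‖∇φ‖²` unchanged and multiplies every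
potential term, hence `P_μ = ‖φ‖²/2 - ∫ F_μ(φ)`, by `r⁻²`. When `I_μ(φ) < 0` and `∇φ ≠ 0`, the
choice `r² = (‖∇φ‖² - I_μ(φ)) / ‖∇φ‖²` puts `φ_r` on `{I_μ = 0}`, so
`S_μ(Q_μ) ≤ S_μ(φ_r) = ‖∇φ‖²/2 + r⁻² P_μ(φ)`. Comparing with `S_μ(φ) = ‖∇φ‖²/2 + P_μ(φ)`, the
claim reduces to `I_μ(φ) ≤ ‖∇φ‖² + 2 P_μ(φ)`, a consequence of the pointwise inequality
`4 F_μ(z) ≤ Re(z̄ f_μ(z))`.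
-/

lemma sub_one_mul_exp_add_one_nonneg (s : ℝ) : 0 ≤ (s - 1) * exp s + 1 := by
  have h : (1 - s) * exp s ≤ exp (-s) * exp s :=
    mul_le_mul_of_nonneg_right (by linarith [add_one_le_exp (-s)]) (exp_pos s).le
  rw [← exp_add, neg_add_cancel, exp_zero] at h
  linarith

lemma sub_two_mul_exp_sub_one_add_two_mul_nonneg {s : ℝ} (hs : 0 ≤ s) :
    0 ≤ (s - 2) * (exp s - 1) + 2 * s := by
  let h : ℝ → ℝ := fun t => (t - 2) * (exp t - 1) + 2 * t
  have hderiv (t : ℝ) : HasDerivAt h ((t - 1) * exp t + 1) t := by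
    have := (((hasDerivAt_id t).sub_const 2).mul ((hasDerivAt_exp t).sub_const 1)).add
      ((hasDerivAt_id t).const_mul 2)
    exact this.congr_deriv (by simp only [id]; ring)
  have hmono : MonotoneOn h (Set.Ici 0) :=
    monotoneOn_of_deriv_nonneg (convex_Ici 0)
      (fun t _ => (hderiv t).continuousAt.continuousWithinAt)
      (fun t _ => (hderiv t).differentiableAt.differentiableWithinAt)
      (fun t _ => (hderiv t).deriv ▸ sub_one_mul_exp_add_one_nonneg t)
  simpa [h] using hmono Set.self_mem_Ici (Set.mem_Ici.2 hs) hs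

section Pointwise

variable {μ : ℝ}

lemma Fmu_pos (hμ1 : μ ≤ 1) {z : ℂ} (hz : z ≠ 0) : 0 < Fmu μ z := by
  have hs : 0 < 4 * π * ‖z‖ ^ 2 := by positivity
  have hexp := sum_le_exp_of_nonneg hs.le 4
  simp only [Finset.sum_range_succ, Finset.sum_range_zero, Nat.factorial] at hexp
  have hμs : 0 ≤ (1 - μ) * (8 * π ^ 2 * ‖z‖ ^ 4) := mul_nonneg (by linarith) (by positivity)
  unfold Fmu
  apply div_pos _ (by positivity)
  push_cast at hexp
  nlinarith [pow_pos hs 3]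

lemma Fmu_nonneg (hμ1 : μ ≤ 1) (z : ℂ) : 0 ≤ Fmu μ z := by
  rcases eq_or_ne z 0 with rfl | hz
  · simp [Fmu]
  · exact (Fmu_pos hμ1 hz).le

lemma nlDensity_nonneg (hμ1 : μ ≤ 1) (z : ℂ) : 0 ≤ nlDensity μ z := by
  have h := add_one_le_exp (4 * π * ‖z‖ ^ 2)
  have hμs : 0 ≤ (1 - μ) * (4 * π * ‖z‖ ^ 2) := mul_nonneg (by linarith) (by positivity)
  unfold nlDensity
  exact mul_nonneg (by nlinarith) (by positivity)

lemma four_mul_Fmu_le_nlDensity (z : ℂ) : 4 * Fmu μ z ≤ nlDensity μ z := by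
  have key := sub_two_mul_exp_sub_one_add_two_mul_nonneg (s := 4 * π * ‖z‖ ^ 2) (by positivity)
  unfold Fmu nlDensity
  rw [← mul_div_assoc, div_le_iff₀ (by positivity)]
  nlinarith [pi_pos]

lemma Fmu_le_exp_sub_one (hμ0 : 0 ≤ μ) (z : ℂ) :
    Fmu μ z ≤ (8 * π)⁻¹ * (exp (4 * π * ‖z‖ ^ 2) - 1) := by
  rw [inv_mul_eq_div, Fmu]
  gcongr ?_ / _
  nlinarith [pi_pos, (by positivity : (0 : ℝ) ≤ ‖z‖ ^ 2),
    mul_nonneg (mul_nonneg (sq_nonneg π) hμ0) (by positivity : (0 : ℝ) ≤ ‖z‖ ^ 4)]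

lemma nlDensity_le_exp_sub_one (hμ0 : 0 ≤ μ) (z : ℂ) :
    nlDensity μ z ≤ (4 * π)⁻¹ * (exp (8 * π * ‖z‖ ^ 2) - 1) := by
  set s := 4 * π * ‖z‖ ^ 2 with hs
  have hs0 : 0 ≤ s := by positivity
  have hexp := add_one_le_exp s
  have key : (exp s - 1 - μ * s) * s ≤ exp (2 * s) - 1 := by
    rw [two_mul, exp_add]
    nlinarith [mul_nonneg hμ0 (mul_nonneg hs0 hs0),
      mul_nonneg (by linarith : 0 ≤ exp s - 1) (by linarith : 0 ≤ exp s - 1 - s)]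
  calc nlDensity μ z = (4 * π)⁻¹ * ((exp s - 1 - μ * s) * s) := by
        rw [nlDensity, hs]; field_simp
    _ ≤ (4 * π)⁻¹ * (exp (8 * π * ‖z‖ ^ 2) - 1) := by
        rw [show 8 * π * ‖z‖ ^ 2 = 2 * s by rw [hs]; ring]; gcongr

end Pointwise

section Functionals

variable {μ : ℝ} {u : E2 → ℂ}

lemma Smu_eq_gradSq_add_Pmu : Smu μ u = gradSq u / 2 + Pmu μ u := by
  rw [Smu, Emu, Pmu]; ring

lemma integrable_Fmu_comp (hμ0 : 0 ≤ μ) (hμ1 : μ ≤ 1) (hu : AEStronglyMeasurable u)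
    (hexp : ExpIntegrable u) : Integrable fun x => Fmu μ (u x) := by
  refine ((hexp (4 * π) (by positivity)).const_mul (8 * π)⁻¹).mono'
    ((by unfold Fmu; fun_prop : Continuous (Fmu μ)).comp_aestronglyMeasurable hu)
    (Eventually.of_forall fun x => ?_)
  rw [Real.norm_of_nonneg (Fmu_nonneg hμ1 _)]
  exact Fmu_le_exp_sub_one hμ0 _

lemma integrable_nlDensity_comp (hμ0 : 0 ≤ μ) (hμ1 : μ ≤ 1) (hu : AEStronglyMeasurable u)
    (hexp : ExpIntegrable u) : Integrable fun x => nlDensity μ (u x) := by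
  refine ((hexp (8 * π) (by positivity)).const_mul (4 * π)⁻¹).mono'
    ((by unfold nlDensity; fun_prop : Continuous (nlDensity μ)).comp_aestronglyMeasurable hu)
    (Eventually.of_forall fun x => ?_)
  rw [Real.norm_of_nonneg (nlDensity_nonneg hμ1 _)]
  exact nlDensity_le_exp_sub_one hμ0 _

lemma integral_Fmu_comp_pos (hμ1 : μ ≤ 1) (hF : Integrable fun x => Fmu μ (u x))
    (hu : ¬ u =ᵐ[volume] 0) : 0 < ∫ x, Fmu μ (u x) := by
  refine (integral_nonneg fun x => Fmu_nonneg hμ1 _).lt_of_ne fun h => hu ?_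
  filter_upwards [(integral_eq_zero_iff_of_nonneg (fun x => Fmu_nonneg hμ1 _) hF).1 h.symm]
    with x hx
  by_contra hx0
  exact (Fmu_pos hμ1 hx0).ne' hx

lemma gradSq_pos_of_Emu_nonneg (hμ1 : μ ≤ 1) (hF : Integrable fun x => Fmu μ (u x))
    (hu : ¬ u =ᵐ[volume] 0) (hE : 0 ≤ Emu μ u) : 0 < gradSq u := by
  rw [Emu] at hE
  linarith [integral_Fmu_comp_pos hμ1 hF hu]

lemma Imu_le_gradSq_add_two_mul_Pmu (hF : Integrable fun x => Fmu μ (u x))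
    (hN : Integrable fun x => nlDensity μ (u x)) : Imu μ u ≤ gradSq u + 2 * Pmu μ u := by
  have hF2 : ∫ x, 2 * Fmu μ (u x) ≤ ∫ x, (nlDensity μ (u x) - 2 * Fmu μ (u x)) :=
    integral_mono (hF.const_mul 2) (hN.sub (hF.const_mul 2))
      fun x => by linarith [four_mul_Fmu_le_nlDensity (μ := μ) (u x)]
  have hl2 : 0 ≤ l2Sq u := integral_nonneg fun x => by positivity
  rw [integral_const_mul] at hF2
  rw [Imu, Pmu]
  linarith

end Functionals

lemma integral_comp_smul_E2 {F : Type*} [NormedAddCommGroup F] [NormedSpace ℝ F] (f : E2 → F)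
    (r : ℝ) : ∫ x, f (r • x) = (r ^ 2)⁻¹ • ∫ x, f x := by
  rw [Measure.integral_comp_smul, finrank_euclideanSpace_fin, abs_of_nonneg (by positivity)]

def dilate (r : ℝ) (u : E2 → ℂ) : E2 → ℂ := fun x => u (r • x)

section Dilation

variable {μ r : ℝ} {u : E2 → ℂ}

lemma gradSq_dilate (hr : r ≠ 0) : gradSq (dilate r u) = gradSq u := by
  have hgrad (x : E2) : ‖fderiv ℝ (dilate r u) x‖ ^ 2 = r ^ 2 * ‖fderiv ℝ u (r • x)‖ ^ 2 := by
    unfold dilate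
    rw [fderiv_comp_smul, norm_smul, mul_pow, Real.norm_eq_abs, sq_abs]
  simp only [gradSq, hgrad, integral_const_mul,
    integral_comp_smul_E2 (fun y => ‖fderiv ℝ u y‖ ^ 2), smul_eq_mul]
  field_simp

lemma l2Sq_dilate : l2Sq (dilate r u) = (r ^ 2)⁻¹ * l2Sq u :=
  integral_comp_smul_E2 (fun y => ‖u y‖ ^ 2) r

lemma Pmu_dilate : Pmu μ (dilate r u) = (r ^ 2)⁻¹ * Pmu μ u := by
  rw [Pmu, Pmu, l2Sq_dilate]
  simp only [dilate, integral_comp_smul_E2 (fun y => Fmu μ (u y)), smul_eq_mul]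
  ring

lemma Smu_dilate (hr : r ≠ 0) :
    Smu μ (dilate r u) = gradSq u / 2 + (r ^ 2)⁻¹ * Pmu μ u := by
  rw [Smu_eq_gradSq_add_Pmu, gradSq_dilate hr, Pmu_dilate]

lemma Imu_dilate (hr : r ≠ 0) :
    Imu μ (dilate r u) = gradSq u - (r ^ 2)⁻¹ * (gradSq u - Imu μ u) := by
  rw [Imu, Imu, gradSq_dilate hr]
  simp only [dilate, integral_comp_smul_E2 (fun y => nlDensity μ (u y) - 2 * Fmu μ (u y)),
    smul_eq_mul]
  ring

lemma MemLp.comp_smul_E2 {F : Type*} [NormedAddCommGroup F] {f : E2 → F} (hr : r ≠ 0)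
    (hf : MemLp f 2 volume) : MemLp (fun x => f (r • x)) 2 volume := by
  have hmeas : AEStronglyMeasurable (fun x => f (r • x)) volume :=
    hf.1.comp_quasiMeasurePreserving (Measure.quasiMeasurePreserving_smul volume hr)
  rw [memLp_two_iff_integrable_sq_norm hf.1] at hf
  rw [memLp_two_iff_integrable_sq_norm hmeas]
  exact (integrable_comp_smul_iff volume (fun y => ‖f y‖ ^ 2) hr).2 hf

lemma MemH1.dilate (hr : r ≠ 0) (hu : MemH1 u) : MemH1 (dilate r u) := by
  obtain ⟨hl2, hdiff, hgrad⟩ := hu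
  refine ⟨MemLp.comp_smul_E2 hr hl2, hdiff.comp (differentiable_id.const_smul r), ?_⟩
  have hfd : fderiv ℝ (_root_.dilate r u) = fun x => r • fderiv ℝ u (r • x) :=
    funext fun _ => fderiv_comp_smul r
  rw [hfd]
  exact (MemLp.comp_smul_E2 hr hgrad).const_smul r

lemma ExpIntegrable.dilate (hr : r ≠ 0) (hu : ExpIntegrable u) : ExpIntegrable (dilate r u) :=
  fun a ha => (integrable_comp_smul_iff volume (fun y => exp (a * ‖u y‖ ^ 2) - 1) hr).2 (hu a ha)

lemma ae_eq_zero_of_dilate (hr : r ≠ 0) (hu : dilate r u =ᵐ[volume] 0) : u =ᵐ[volume] 0 := by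
  have hcomp := (Measure.quasiMeasurePreserving_smul volume (inv_ne_zero hr)).ae_eq_comp hu
  filter_upwards [hcomp] with x hx
  simpa [dilate, smul_smul, mul_inv_cancel₀ hr] using hx

end Dilation

lemma le_Smu_rescaled_of_Imu_neg {μ m : ℝ} {φ : E2 → ℂ}
    (hm : ∀ ψ, MemH1 ψ → ExpIntegrable ψ → ¬ ψ =ᵐ[volume] 0 → Imu μ ψ = 0 → m ≤ Smu μ ψ)
    (hφmem : MemH1 φ) (hφexp : ExpIntegrable φ) (hφne : ¬ φ =ᵐ[volume] 0)
    (hg : 0 < gradSq φ) (hI : Imu μ φ < 0) :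
    m ≤ gradSq φ / 2 + gradSq φ / (gradSq φ - Imu μ φ) * Pmu μ φ := by
  set r := √((gradSq φ - Imu μ φ) / gradSq φ)
  have hr : r ≠ 0 := (sqrt_pos.2 (div_pos (by linarith) hg)).ne'
  have hr2 : (r ^ 2)⁻¹ = gradSq φ / (gradSq φ - Imu μ φ) := by
    rw [sq_sqrt (div_pos (by linarith) hg).le, inv_div]
  have hIψ : Imu μ (dilate r φ) = 0 := by
    rw [Imu_dilate hr, hr2]
    field_simp [(by linarith : gradSq φ - Imu μ φ ≠ 0)]
    ring
  rw [← hr2, ← Smu_dilate hr]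
  exact hm _ (hφmem.dilate hr) (hφexp.dilate hr) (fun h => hφne (ae_eq_zero_of_dilate hr h)) hIψ

lemma le_two_mul_sub_of_le_rescaled {g I P m : ℝ} (hg : 0 < g) (hI : I < 0)
    (hm : m ≤ g / 2 + g / (g - I) * P) (hIP : I ≤ g + 2 * P) :
    I ≤ 2 * (g / 2 + P - m) := by
  have hK : 0 < g - I := by linarith
  have ht : g / (g - I) * P = P + I * P / (g - I) := by field_simp; ring
  have hIP' : I * P / (g - I) ≤ -I / 2 := by
    rw [div_le_iff₀ hK]; nlinarith
  linarith

theorem I_upper_bound_on_Kminus_general (μ : ℝ) (hμ : μ = 0 ∨ μ = 1)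
    (Q : E2 → ℂ)
    (hIchar : IsLeast {s : ℝ | ∃ ψ : E2 → ℂ, MemH1 ψ ∧ ExpIntegrable ψ ∧
        ¬ ψ =ᵐ[volume] (0 : E2 → ℂ) ∧ Imu μ ψ = 0 ∧ s = Smu μ ψ} (Smu μ Q))
    (φ : E2 → ℂ) (hφmem : MemH1 φ) (hφexp : ExpIntegrable φ)
    (hφne : ¬ φ =ᵐ[volume] (0 : E2 → ℂ))
    (hE : 0 ≤ Emu μ φ) (hI : Imu μ φ < 0) :
    Imu μ φ ≤ 2 * (Smu μ φ - Smu μ Q) := by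
  obtain ⟨hμ0, hμ1⟩ : 0 ≤ μ ∧ μ ≤ 1 := by rcases hμ with rfl | rfl <;> norm_num
  have hφmeas : AEStronglyMeasurable φ := hφmem.2.1.continuous.aestronglyMeasurable
  have hF := integrable_Fmu_comp hμ0 hμ1 hφmeas hφexp
  have hg := gradSq_pos_of_Emu_nonneg hμ1 hF hφne hE
  have hSQ := le_Smu_rescaled_of_Imu_neg
    (fun ψ h₁ h₂ h₃ h₄ => hIchar.2 ⟨ψ, h₁, h₂, h₃, h₄, rfl⟩) hφmem hφexp hφne hg hI
  rw [Smu_eq_gradSq_add_Pmu]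
  exact le_two_mul_sub_of_le_rescaled hg hI hSQ
    (Imu_le_gradSq_add_two_mul_Pmu hF (integrable_nlDensity_comp hμ0 hμ1 hφmeas hφexp))

/-- if `φ ∈ 𝒦⁻_μ` has nonnegative energy, then
`I_μ(φ) ≤ 2(S_μ(φ) - S_μ(Q_μ))`. -/
theorem I_upper_bound_on_Kminus (μ : ℝ) (hμ : μ = 0 ∨ μ = 1)
    (Q : E2 → ℂ) (hQ : IsGroundState μ Q)
    (hIchar : IsLeast {s : ℝ | ∃ ψ : E2 → ℂ, MemH1 ψ ∧ ExpIntegrable ψ ∧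
        ¬ ψ =ᵐ[volume] (0 : E2 → ℂ) ∧ Imu μ ψ = 0 ∧ s = Smu μ ψ} (Smu μ Q))
    (φ : E2 → ℂ) (hφmem : MemH1 φ) (hφexp : ExpIntegrable φ)
    (hφne : ¬ φ =ᵐ[volume] (0 : E2 → ℂ))
    (hE : 0 ≤ Emu μ φ) (hS : Smu μ φ < Smu μ Q) (hI : Imu μ φ < 0) :
    Imu μ φ ≤ 2 * (Smu μ φ - Smu μ Q) :=
  I_upper_bound_on_Kminus_general μ hμ Q hIchar φ hφmem hφexp hφne hE hI
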